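/- arXiv:math/0506171 — 4 statements merged into one kernel-verified Lean document; each statement's English description precedes it below -/
import Mathlib

section
/- Let A be an algebraic torus with Lie algebra a acting linearly on V = ⊕_{i=1}^n (ℂ_{χ_i} ⊕ ℂ_{-χ_i}) with characters χ_1,…,χ_n ∈ a*, where ω pairs ℂ_{χ_i} with ℂ_{-χ_i}. The moment map is m(x_1,…,x_n,y_1,…,y_n) = Σ_i x_i y_i χ_i. Suppose no character χ_i is 'critical', i.e., each χ_i lies in the span of {χ_j : j ≠ i}. Then the zero fiber m^{-1}(0) is an irreducible algebraic variety. -/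
/-!
Let `K ⊆ kⁿ` be the space of linear relations among the `χᵢ`, so that the zero fiber is
`Z = {(x, y) | x ⊙ y ∈ K}`. If `β₁, …, β_m` span `K`, the polynomial map
`(x, s) ↦ (x, y)` with `yᵢ = (∏_{j ≠ i} x_j) · (∑ₗ sₗ βₗ)ᵢ` lands in `Z` and hits every point of
`Z` with all `xᵢ ≠ 0`; the vanishing ideal of its image is the kernel of a map into a polynomial
ring, hence prime. Non-criticality says that no coordinate vanishes on `K`, so `K` contains a
vector `κ` with all `κᵢ ≠ 0`. Then every point of `Z` is the value at `t = 0` of a polynomial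
curve in `Z` with `xᵢ(t) yᵢ(t) = xᵢ yᵢ + t² κᵢ` and `xᵢ(t) ≠ 0` for `t ≠ 0`, so `Z` lies in the
Zariski closure of the image and has the same vanishing ideal.
-/

open MvPolynomial

namespace MvPolynomial

variable {k σ τ : Type*} [Field k] [Infinite k]

theorem vanishingIdeal_range_aeval_eq_ker (v : σ → MvPolynomial τ k) :
    vanishingIdeal k (Set.range fun (w : τ → k) u => aeval w (v u)) = RingHom.ker (aeval v) := by
  ext f
  simp only [mem_vanishingIdeal_iff, Set.forall_mem_range, RingHom.mem_ker, funext_iff (q := 0),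
    map_zero, ← coe_aeval_eq_eval, AlgHom.coe_toRingHom, comp_aeval_apply]

theorem isPrime_vanishingIdeal_range_aeval (v : σ → MvPolynomial τ k) :
    (vanishingIdeal k (Set.range fun (w : τ → k) u => aeval w (v u))).IsPrime := by
  rw [vanishingIdeal_range_aeval_eq_ker]
  exact RingHom.ker_isPrime _

theorem aeval_eval_zero_eq_zero_of_forall_ne_zero (f : MvPolynomial σ k) (γ : σ → Polynomial k)
    (h : ∀ t ≠ 0, aeval (fun u => (γ u).eval t) f = 0) :
    aeval (fun u => (γ u).eval 0) f = 0 := by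
  have along_curve (t : k) : aeval (fun u => (γ u).eval t) f = (aeval γ f).eval t := by
    simp only [← Polynomial.coe_aeval_eq_eval, comp_aeval_apply]
  have : aeval γ f = 0 := by
    refine Polynomial.eq_zero_of_infinite_isRoot _ ((Set.finite_singleton 0).infinite_compl.mono ?_)
    intro t ht
    simpa [← along_curve] using h t ht
  rw [along_curve, this, Polynomial.eval_zero]

end MvPolynomial

theorem Polynomial.exists_mul_eq_C_add_C_mul_X_sq {k : Type*} [Field k] (a b c : k) (hc : c ≠ 0) :
    ∃ P Q : Polynomial k, P.eval 0 = a ∧ Q.eval 0 = b ∧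
      P * Q = Polynomial.C (a * b) + Polynomial.C c * Polynomial.X ^ 2 ∧
      ∀ t ≠ 0, P.eval t ≠ 0 := by
  by_cases ha : a = 0
  · subst ha
    by_cases hb : b = 0
    · subst hb
      exact ⟨X, C c * X, by simp, by simp, by simp; ring, fun t ht => by simpa using ht⟩
    · refine ⟨C (c / b) * X ^ 2, C b, by simp, by simp, ?_, fun t ht => by simp [hc, hb, ht]⟩
      rw [zero_mul, C_0, zero_add, mul_comm, ← mul_assoc, ← C_mul, mul_div_cancel₀ _ hb]
  · refine ⟨C a, C b + C (c / a) * X ^ 2, by simp, by simp, ?_, fun _ _ => by simpa using ha⟩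
    rw [mul_add, ← C_mul, ← mul_assoc, ← C_mul, mul_div_cancel₀ _ ha]

section HadamardPreimage

variable {k ι : Type*} [Field k]

def hadamardPreimage (K : Submodule k (ι → k)) : Set (ι ⊕ ι → k) :=
  {p | p ∘ Sum.inl * p ∘ Sum.inr ∈ K}

section Parametrization

variable [Fintype ι] [DecidableEq ι] {m : ℕ}

noncomputable def hadamardParam (β : Fin m → ι → k) : ι ⊕ ι → MvPolynomial (ι ⊕ Fin m) k :=
  Sum.elim (fun i => X (Sum.inl i))
    (fun i => (∏ j ∈ Finset.univ.erase i, X (Sum.inl j)) * ∑ l, C (β l i) * X (Sum.inr l))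

theorem aeval_hadamardParam_inl (β : Fin m → ι → k) (w : ι ⊕ Fin m → k) (i : ι) :
    aeval w (hadamardParam β (Sum.inl i)) = w (Sum.inl i) := by
  simp [hadamardParam]

theorem aeval_hadamardParam_inr (β : Fin m → ι → k) (w : ι ⊕ Fin m → k) (i : ι) :
    aeval w (hadamardParam β (Sum.inr i)) =
      (∏ j ∈ Finset.univ.erase i, w (Sum.inl j)) * ∑ l, w (Sum.inr l) * β l i := by
  simp [hadamardParam, mul_comm]

theorem aeval_hadamardParam_mem_hadamardPreimage {K : Submodule k (ι → k)} {β : Fin m → ι → k}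
    (hβ : ∀ l, β l ∈ K) (w : ι ⊕ Fin m → k) :
    (fun u => aeval w (hadamardParam β u)) ∈ hadamardPreimage K := by
  have hprod : (fun u => aeval w (hadamardParam β u)) ∘ Sum.inl *
      (fun u => aeval w (hadamardParam β u)) ∘ Sum.inr =
      (∏ j, w (Sum.inl j)) • ∑ l, w (Sum.inr l) • β l := by
    ext i
    simp only [Pi.mul_apply, Function.comp_apply, aeval_hadamardParam_inl,
      aeval_hadamardParam_inr, Pi.smul_apply, Finset.sum_apply, smul_eq_mul,
      ← Finset.mul_prod_erase _ _ (Finset.mem_univ i)]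
    ring
  show _ ∈ K
  rw [hprod]
  exact K.smul_mem _ (K.sum_mem fun l _ => K.smul_mem _ (hβ l))

theorem mem_range_hadamardParam {K : Submodule k (ι → k)} {β : Fin m → ι → k}
    (hβ : K ≤ Submodule.span k (Set.range β)) {p : ι ⊕ ι → k} (hp : p ∈ hadamardPreimage K)
    (hx : ∀ i, p (Sum.inl i) ≠ 0) :
    p ∈ Set.range fun (w : ι ⊕ Fin m → k) u => aeval w (hadamardParam β u) := by
  set T := ∏ i, p (Sum.inl i)
  have hT : T ≠ 0 := Finset.prod_ne_zero_iff.mpr fun i _ => hx i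
  obtain ⟨s, hs⟩ := (Submodule.mem_span_range_iff_exists_fun k).mp (hβ (K.smul_mem T⁻¹ hp))
  refine ⟨Sum.elim (p ∘ Sum.inl) s, funext ?_⟩
  rintro (i | i)
  · simp [aeval_hadamardParam_inl]
  · have hsi := congrFun hs i
    have hTi := Finset.mul_prod_erase Finset.univ (fun j => p (Sum.inl j)) (Finset.mem_univ i)
    simp only [Finset.sum_apply, Pi.smul_apply, smul_eq_mul, Pi.mul_apply,
      Function.comp_apply] at hsi
    simp only [aeval_hadamardParam_inr, Sum.elim_inl, Sum.elim_inr, Function.comp_apply, hsi]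
    field_simp
    rw [show T = _ from hTi.symm]
    ring

theorem vanishingIdeal_range_hadamardParam_le [Infinite k] {K : Submodule k (ι → k)}
    {β : Fin m → ι → k} (hβ : K ≤ Submodule.span k (Set.range β)) {κ : ι → k} (hκK : κ ∈ K)
    (hκ : ∀ i, κ i ≠ 0) :
    vanishingIdeal k (Set.range fun (w : ι ⊕ Fin m → k) u => aeval w (hadamardParam β u)) ≤
      vanishingIdeal k (hadamardPreimage K) := by
  intro f hf p hp
  choose P Q hP0 hQ0 hPQ hPne using fun i =>
    Polynomial.exists_mul_eq_C_add_C_mul_X_sq (p (Sum.inl i)) (p (Sum.inr i)) (κ i) (hκ i)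
  have hγ0 : (fun u => (Sum.elim P Q u).eval 0) = p := by
    funext u
    rcases u with i | i
    · exact hP0 i
    · exact hQ0 i
  rw [← hγ0]
  refine aeval_eval_zero_eq_zero_of_forall_ne_zero f _ fun t ht => hf _ ?_
  refine mem_range_hadamardParam hβ ?_ fun i => hPne i t ht
  have hprod : (fun u => (Sum.elim P Q u).eval t) ∘ Sum.inl *
      (fun u => (Sum.elim P Q u).eval t) ∘ Sum.inr = p ∘ Sum.inl * p ∘ Sum.inr + t ^ 2 • κ := by
    ext i
    have hPQt := congrArg (Polynomial.eval t) (hPQ i)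
    simp only [Polynomial.eval_mul, Polynomial.eval_add, Polynomial.eval_C, Polynomial.eval_pow,
      Polynomial.eval_X] at hPQt
    simp only [Pi.mul_apply, Pi.add_apply, Pi.smul_apply, Function.comp_apply, Sum.elim_inl,
      Sum.elim_inr, smul_eq_mul, hPQt]
    ring
  show _ ∈ K
  rw [hprod]
  exact K.add_mem hp (K.smul_mem _ hκK)

end Parametrization

theorem isPrime_vanishingIdeal_hadamardPreimage [Infinite k] [Fintype ι] {K : Submodule k (ι → k)}
    (hK : ∀ i, ∃ c ∈ K, c i ≠ 0) : (vanishingIdeal k (hadamardPreimage K)).IsPrime := by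
  classical
  obtain ⟨κ, hκK, hκ⟩ :=
    Module.Dual.exists_forall_mem_ne_zero_of_forall_exists K (fun i => LinearMap.proj i) hK
  obtain ⟨m, β, hβ⟩ := Submodule.fg_iff_exists_fin_generating_family.mp (IsNoetherian.noetherian K)
  have hβK (l : Fin m) : β l ∈ K := hβ ▸ Submodule.subset_span (Set.mem_range_self l)
  have hrange : (Set.range fun (w : ι ⊕ Fin m → k) u => aeval w (hadamardParam β u)) ⊆
      hadamardPreimage K := by
    rintro _ ⟨w, rfl⟩
    exact aeval_hadamardParam_mem_hadamardPreimage hβK w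
  rw [le_antisymm (vanishingIdeal_anti_mono hrange)
    (vanishingIdeal_range_hadamardParam_le hβ.ge hκK hκ)]
  exact isPrime_vanishingIdeal_range_aeval _

end HadamardPreimage

theorem exists_mem_ker_linearCombination_apply_ne_zero {k ι E : Type*} [Field k] [Fintype ι]
    [AddCommGroup E] [Module k E] {χ : ι → E} {i : ι}
    (h : χ i ∈ Submodule.span k (χ '' {j | j ≠ i})) :
    ∃ c ∈ LinearMap.ker (Fintype.linearCombination k χ), c i ≠ 0 := by
  classical
  obtain ⟨l, hl, hlχ⟩ := (Finsupp.mem_span_image_iff_linearCombination k).mp h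
  have hli : l i = 0 := Finsupp.notMem_support_iff.mp fun hi => hl hi rfl
  refine ⟨Pi.single i 1 - ⇑l, ?_, by simp [hli]⟩
  rw [LinearMap.mem_ker, map_sub, Fintype.linearCombination_apply_single, one_smul,
    ← Finsupp.linearCombination_eq_fintype_linearCombination_apply]
  simp [hlχ]

/-- If a torus acts on `V = ⊕ᵢ (ℂ_{χᵢ} ⊕ ℂ_{-χᵢ})` and no character `χᵢ` is critical
(each `χᵢ` lies in the span of the others), then the zero fiber of the moment map
`m(x,y) = Σᵢ xᵢyᵢ χᵢ` is irreducible, i.e. its vanishing ideal is prime. -/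
theorem torus_moment_zero_fiber_irreducible
    (n : ℕ) (E : Type*) [AddCommGroup E] [Module ℂ E]
    (χ : Fin n → E)
    (hnoncrit : ∀ i : Fin n, χ i ∈ Submodule.span ℂ (χ '' {j | j ≠ i}))
    (Z : Set ((Fin n ⊕ Fin n) → ℂ))
    (hZ : Z = {p | ∑ i : Fin n, (p (Sum.inl i) * p (Sum.inr i)) • χ i = 0}) :
    (MvPolynomial.vanishingIdeal ℂ Z).IsPrime := by
  have hZK : Z = hadamardPreimage (LinearMap.ker (Fintype.linearCombination ℂ χ)) := by
    rw [hZ]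
    ext p
    simp [hadamardPreimage, Fintype.linearCombination_apply]
  rw [hZK]
  exact isPrime_vanishingIdeal_hadamardPreimage fun i =>
    exists_mem_ker_linearCombination_apply_ne_zero (hnoncrit i)
end

section
/- Let A be a torus with Lie algebra a acting with finite kernel on a symplectic representation V = ⊕_{i=1}^n (ℂ_{χ_i} ⊕ ℂ_{-χ_i}), with moment map m(x,y) = Σ_i x_i y_i χ_i ∈ a*. Then for every irreducible component C of m^{-1}(0) there is a morphism (section) σ : a* → V with m∘σ = id_{a*} and σ(a*) ∩ C ≠ ∅. -/
open scoped BigOperators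

/-- The Zariski topology on affine space `σ → ℂ`. -/
def zariskiTop (σ : Type*) : TopologicalSpace (σ → ℂ) :=
  TopologicalSpace.generateFrom
    {U | ∃ f : MvPolynomial σ ℂ, U = {p | MvPolynomial.eval p f ≠ 0}}

/-!
Let `C` be an irreducible component of `m⁻¹(0)`. If every point of `C` had `x_i = y_i = 0`, then
freeing the coordinate `x_i` would sweep `C` out to a strictly larger irreducible subset of
`m⁻¹(0)`; so each of the open sets `{(x_i, y_i) ≠ 0}` meets `C`, and by irreducibility `C` contains
a point `v` with `(x_i, y_i) ≠ 0` for all `i`. Near such a point each product `x_i y_i` can be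
shifted by an arbitrary `c_i` affinely in `c`, and composing with a linear right inverse of
`c ↦ Σ c_i χ_i` (onto because the `χ_i` span) gives an affine section through `v`.
-/

open MvPolynomial Function Sum

namespace zariskiTop

variable {σ : Type*}

theorem isOpen_setOf_eval_ne_zero (f : MvPolynomial σ ℂ) :
    @IsOpen _ (zariskiTop σ) {p | eval p f ≠ 0} :=
  TopologicalSpace.GenerateOpen.basic _ ⟨f, rfl⟩

theorem isOpen_setOf_apply_ne_zero (j : σ) : @IsOpen _ (zariskiTop σ) {p | p j ≠ 0} := by
  simpa using isOpen_setOf_eval_ne_zero (X j : MvPolynomial σ ℂ)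

theorem isOpen_setOf_map_eval_ne_zero (Q : Polynomial (MvPolynomial σ ℂ)) :
    @IsOpen _ (zariskiTop σ) {p | Q.map (eval p) ≠ 0} := by
  have : {p | Q.map (eval p) ≠ 0} = ⋃ i, {p | eval p (Q.coeff i) ≠ 0} := by
    ext p
    simp [Polynomial.ext_iff]
  rw [this]
  exact @isOpen_iUnion _ _ (zariskiTop σ) _ fun i => isOpen_setOf_eval_ne_zero _

theorem exists_eval_ne_zero_subset {u : Set (σ → ℂ)} (hu : @IsOpen _ (zariskiTop σ) u)
    {x : σ → ℂ} (hx : x ∈ u) :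
    ∃ f : MvPolynomial σ ℂ, eval x f ≠ 0 ∧ {p | eval p f ≠ 0} ⊆ u := by
  induction hu generalizing x with
  | basic U hU =>
    obtain ⟨f, rfl⟩ := hU
    exact ⟨f, hx, subset_rfl⟩
  | univ => exact ⟨1, by simp, Set.subset_univ _⟩
  | inter U V _ _ ihU ihV =>
    obtain ⟨f, hf, hfU⟩ := ihU hx.1
    obtain ⟨g, hg, hgV⟩ := ihV hx.2
    refine ⟨f * g, by simp [hf, hg], fun p hp => ?_⟩
    replace hp : eval p f * eval p g ≠ 0 := by simpa using hp
    exact ⟨hfU (left_ne_zero_of_mul hp), hgV (right_ne_zero_of_mul hp)⟩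
  | sUnion S _ ih =>
    obtain ⟨U, hU, hxU⟩ := hx
    obtain ⟨f, hf, hfU⟩ := ih U hU hxU
    exact ⟨f, hf, hfU.trans (Set.subset_sUnion_of_mem hU)⟩

theorem isPreirreducible_iff {C : Set (σ → ℂ)} :
    @IsPreirreducible _ (zariskiTop σ) C ↔ ∀ f g : MvPolynomial σ ℂ,
      (∃ p ∈ C, eval p f ≠ 0) → (∃ p ∈ C, eval p g ≠ 0) →
        ∃ p ∈ C, eval p f ≠ 0 ∧ eval p g ≠ 0 := by
  refine ⟨fun hC f g => hC _ _ (isOpen_setOf_eval_ne_zero f) (isOpen_setOf_eval_ne_zero g),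
    fun hC u v hu hv ⟨p, hpC, hpu⟩ ⟨q, hqC, hqv⟩ => ?_⟩
  obtain ⟨f, hfp, hfu⟩ := exists_eval_ne_zero_subset hu hpu
  obtain ⟨g, hgq, hgv⟩ := exists_eval_ne_zero_subset hv hqv
  obtain ⟨r, hrC, hrf, hrg⟩ := hC f g ⟨p, hpC, hfp⟩ ⟨q, hqC, hgq⟩
  exact ⟨r, hrC, hfu hrf, hgv hrg⟩

end zariskiTop

section Cylinder

variable {σ : Type*} [DecidableEq σ] (e : σ)

noncomputable def polynomialInVar : MvPolynomial σ ℂ →+* Polynomial (MvPolynomial σ ℂ) :=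
  eval₂Hom (Polynomial.C.comp C) fun j => if j = e then Polynomial.X else Polynomial.C (X j)

theorem eval_update_eq_eval_map (f : MvPolynomial σ ℂ) (p : σ → ℂ) (t : ℂ) :
    eval (update p e t) f = ((polynomialInVar e f).map (eval p)).eval t := by
  induction f using MvPolynomial.induction_on with
  | C a => simp [polynomialInVar]
  | add f g hf hg => simp [hf, hg]
  | mul_X f j hf =>
    rcases eq_or_ne j e with rfl | hje
    · simp [hf, polynomialInVar]
    · simp [hf, polynomialInVar, hje]

theorem exists_eval_update_ne_zero_iff (f : MvPolynomial σ ℂ) (p : σ → ℂ) :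
    (∃ t, eval (update p e t) f ≠ 0) ↔ (polynomialInVar e f).map (eval p) ≠ 0 := by
  simp_rw [eval_update_eq_eval_map]
  refine ⟨fun ⟨t, ht⟩ h => by simp [h] at ht, fun h => ?_⟩
  by_contra! hzero
  exact h (Polynomial.funext (by simpa using hzero))

def cylinder (C : Set (σ → ℂ)) : Set (σ → ℂ) := {q | ∃ p ∈ C, ∃ t, q = update p e t}

theorem subset_cylinder (C : Set (σ → ℂ)) : C ⊆ cylinder e C :=
  fun p hp => ⟨p, hp, p e, (update_eq_self e p).symm⟩

-- The coefficients of `f` in the variable `e` cut out a Zariski open set of base points.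
theorem IsPreirreducible.cylinder {C : Set (σ → ℂ)} (hC : @IsPreirreducible _ (zariskiTop σ) C) :
    @IsPreirreducible _ (zariskiTop σ) (cylinder e C) := by
  rw [zariskiTop.isPreirreducible_iff]
  rintro f g ⟨_, ⟨p, hp, t, rfl⟩, hf⟩ ⟨_, ⟨p', hp', t', rfl⟩, hg⟩
  obtain ⟨q, hq, hfq, hgq⟩ := hC _ _ (zariskiTop.isOpen_setOf_map_eval_ne_zero _)
    (zariskiTop.isOpen_setOf_map_eval_ne_zero _)
    ⟨p, hp, (exists_eval_update_ne_zero_iff e f p).1 ⟨t, hf⟩⟩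
    ⟨p', hp', (exists_eval_update_ne_zero_iff e g p').1 ⟨t', hg⟩⟩
  obtain ⟨s, hs⟩ := (exists_eval_update_ne_zero_iff e (f * g) q).2 <| by
    rw [map_mul, Polynomial.map_mul]
    exact mul_ne_zero hfq hgq
  rw [map_mul] at hs
  exact ⟨update q e s, ⟨q, hq, s, rfl⟩, left_ne_zero_of_mul hs, right_ne_zero_of_mul hs⟩

theorem IsIrreducible.cylinder {C : Set (σ → ℂ)} (hC : @IsIrreducible _ (zariskiTop σ) C) :
    @IsIrreducible _ (zariskiTop σ) (cylinder e C) :=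
  ⟨hC.1.mono (subset_cylinder e C), hC.2.cylinder e⟩

end Cylinder

section MomentMap

variable {ι : Type*}

/-- Moves `x_i` by `c_i / y_i`, or `y_i` by `c_i / x_i` where `y_i = 0`: either way `x_i y_i`
increases by `c_i` as long as `(x_i, y_i) ≠ 0`. -/
noncomputable def momentLift (v : ι ⊕ ι → ℂ) : (ι → ℂ) →ₗ[ℂ] (ι ⊕ ι → ℂ) :=
  LinearMap.pi <| Sum.elim
    (fun i => (if v (inr i) = 0 then 0 else (v (inr i))⁻¹) • LinearMap.proj i)
    (fun i => (if v (inr i) = 0 then (v (inl i))⁻¹ else 0) • LinearMap.proj i)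

theorem add_momentLift_inl_mul_inr {v : ι ⊕ ι → ℂ} {i : ι} (hv : v (inl i) ≠ 0 ∨ v (inr i) ≠ 0)
    (c : ι → ℂ) :
    (v + momentLift v c) (inl i) * (v + momentLift v c) (inr i) =
      v (inl i) * v (inr i) + c i := by
  change (v (inl i) + (if v (inr i) = 0 then 0 else (v (inr i))⁻¹) * c i) *
    (v (inr i) + (if v (inr i) = 0 then (v (inl i))⁻¹ else 0) * c i) = _
  split_ifs with hy
  · have hx : v (inl i) ≠ 0 := hv.resolve_right (not_not.2 hy)
    field_simp
    simp [hy]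
  · field_simp
    ring

variable [Fintype ι] {E : Type*} [AddCommGroup E] [Module ℂ E]

def momentMap (χ : ι → E) (p : ι ⊕ ι → ℂ) : E :=
  ∑ i, (p (inl i) * p (inr i)) • χ i

theorem momentMap_update_inl_of_inr_eq_zero [DecidableEq ι] (χ : ι → E) {p : ι ⊕ ι → ℂ}
    {i : ι} (hp : p (inr i) = 0) (t : ℂ) :
    momentMap χ (update p (inl i) t) = momentMap χ p := by
  refine Finset.sum_congr rfl fun j _ => ?_
  rcases eq_or_ne j i with rfl | hji
  · simp [hp]
  · simp [hji]

-- Otherwise `x_i` could be freed on `C` inside `m⁻¹(0)`, contradicting maximality.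
theorem exists_mem_pair_ne_zero_of_maximal {χ : ι → E} {C : Set (ι ⊕ ι → ℂ)}
    (hC : Maximal (fun C' => C' ⊆ momentMap χ ⁻¹' {0} ∧ @IsIrreducible _ (zariskiTop _) C') C)
    (i : ι) : ∃ p ∈ C, p (inl i) ≠ 0 ∨ p (inr i) ≠ 0 := by
  classical
  by_contra! hzero
  have hcyl : cylinder (inl i) C ⊆ C := by
    refine hC.2 ⟨?_, hC.1.2.cylinder _⟩ (subset_cylinder _ C)
    rintro _ ⟨p, hp, t, rfl⟩
    rw [Set.mem_preimage, momentMap_update_inl_of_inr_eq_zero χ (hzero p hp).2]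
    exact hC.1.1 hp
  obtain ⟨p, hp⟩ := hC.1.2.1
  simpa using (hzero _ (hcyl ⟨p, hp, 1, rfl⟩)).1

theorem exists_mem_forall_pair_ne_zero_of_maximal {χ : ι → E} {C : Set (ι ⊕ ι → ℂ)}
    (hC : Maximal (fun C' => C' ⊆ momentMap χ ⁻¹' {0} ∧ @IsIrreducible _ (zariskiTop _) C') C) :
    ∃ v ∈ C, ∀ i, v (inl i) ≠ 0 ∨ v (inr i) ≠ 0 := by
  classical
  let := zariskiTop (ι ⊕ ι)
  let W : ι → Set (ι ⊕ ι → ℂ) := fun i => {p | p (inl i) ≠ 0} ∪ {p | p (inr i) ≠ 0}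
  have hW : ∀ i, IsOpen (W i) := fun i =>
    (zariskiTop.isOpen_setOf_apply_ne_zero (inl i)).union
      (zariskiTop.isOpen_setOf_apply_ne_zero (inr i))
  obtain ⟨v, hvC, hvW⟩ := isIrreducible_iff_sInter.1 hC.1.2
    (Finset.univ.image W) (by simpa using hW)
    (by simpa [W, Set.Nonempty] using exists_mem_pair_ne_zero_of_maximal hC)
  exact ⟨v, hvC, by simpa [W] using hvW⟩

theorem momentMap_add_momentLift (χ : ι → E) {v : ι ⊕ ι → ℂ}
    (hv : ∀ i, v (inl i) ≠ 0 ∨ v (inr i) ≠ 0) (c : ι → ℂ) :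
    momentMap χ (v + momentLift v c) = momentMap χ v + Fintype.linearCombination ℂ χ c := by
  simp only [momentMap, add_momentLift_inl_mul_inr (hv _), add_smul, Finset.sum_add_distrib,
    Fintype.linearCombination_apply]

end MomentMap

theorem exists_mvPolynomial_eval_eq_add_linearMap {R σ τ : Type*} [CommRing R] [Fintype σ]
    [DecidableEq σ] (v : τ → R) (M : (σ → R) →ₗ[R] (τ → R)) :
    ∃ P : τ → MvPolynomial σ R, ∀ α j, (v + M α) j = eval α (P j) :=
  ⟨fun j => C (v j) + (LinearMap.toMatrix' M).toMvPolynomial j, fun α j => by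
    simp [Matrix.toMvPolynomial_eval_eq_apply, LinearMap.toMatrix'_mulVec]⟩

/-- If a torus acts with finite kernel (the characters `χᵢ` span `a*`) on
`V = ⊕ᵢ(ℂ_{χᵢ} ⊕ ℂ_{-χᵢ})` with moment map `m(x,y) = Σᵢ xᵢyᵢχᵢ`, then for every
irreducible component `C` of `m⁻¹(0)` there is a polynomial section `σ : a* → V`
with `m ∘ σ = id` whose image meets `C`. -/
theorem torus_moment_map_section (n k : ℕ)
    (χ : Fin n → (Fin k → ℂ))
    (hspan : Submodule.span ℂ (Set.range χ) = ⊤)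
    (m : ((Fin n ⊕ Fin n) → ℂ) → (Fin k → ℂ))
    (hm : ∀ p, m p = ∑ i : Fin n, (p (Sum.inl i) * p (Sum.inr i)) • χ i)
    (C : Set ((Fin n ⊕ Fin n) → ℂ))
    (hCsub : C ⊆ m ⁻¹' {0})
    (hCirr : @IsIrreducible _ (zariskiTop (Fin n ⊕ Fin n)) C)
    (hCmax : ∀ C' : Set ((Fin n ⊕ Fin n) → ℂ), C ⊆ C' → C' ⊆ m ⁻¹' {0} →
      @IsIrreducible _ (zariskiTop (Fin n ⊕ Fin n)) C' → C' = C) :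
    ∃ s : (Fin k → ℂ) → ((Fin n ⊕ Fin n) → ℂ),
      (∃ P : (Fin n ⊕ Fin n) → MvPolynomial (Fin k) ℂ,
        ∀ (α : Fin k → ℂ) (j : Fin n ⊕ Fin n), s α j = MvPolynomial.eval α (P j)) ∧
      (∀ α : Fin k → ℂ, m (s α) = α) ∧
      (Set.range s ∩ C).Nonempty := by
  obtain rfl : m = momentMap χ := funext hm
  obtain ⟨v, hvC, hv⟩ := exists_mem_forall_pair_ne_zero_of_maximal
    ⟨⟨hCsub, hCirr⟩, fun C' hC' hle => (hCmax C' hle hC'.1 hC'.2).le⟩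
  have hv0 : momentMap χ v = 0 := hCsub hvC
  obtain ⟨L, hL⟩ := (Fintype.linearCombination ℂ χ).exists_rightInverse_of_surjective
    ((Fintype.range_linearCombination ℂ χ).trans hspan)
  refine ⟨fun α => v + momentLift v (L α),
    exists_mvPolynomial_eval_eq_add_linearMap v (momentLift v ∘ₗ L), fun α => ?_,
    v, ⟨0, by simp⟩, hvC⟩
  rw [momentMap_add_momentLift χ hv, hv0, zero_add, ← LinearMap.comp_apply, hL,
    LinearMap.id_apply]
end

section
/- Let g be a complex semisimple Lie algebra with root system Δ, positive roots Δ⁺ and Weyl group W. Let χ be a dominant weight with 2χ = α ∈ Δ⁺. Then α is a long root in an irreducible component of Δ of type C_n (n ≥ 1, with C_1 = A_1), and χ is the first fundamental weight of that component. -/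
open scoped RealInnerProductSpace

/-!
Write `α = 2χ`. Integrality of `χ` makes `⟨α, β^∨⟩` even for every root `β`; since `⟨β, α^∨⟩`
is an integer and the product of the two lies in `(0, 4)` when `β ≠ ±α` is not orthogonal to
`α` (strict Cauchy–Schwarz), such a `β` has `⟨α, β^∨⟩ = ±2`, `⟨β, α^∨⟩ = ±1`, so
`|β|² = 2|χ|²` and `⟪χ, β⟫ = ±|χ|²`.

Call `e` a half-root if it is an integral weight with `2e ∈ Δ` and `|e| = |χ|`. Two half-roots
`e ≠ ±f` are orthogonal, and "`f = ±e` or `e + f ∈ Δ`" is an equivalence relation on them; let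
`W` be the class of `χ`. A root `y` not orthogonal to `2e`, `e ∈ W`, is `±2e` or `e' + (y - e')`
with `e' = ±e` and `y - e' ∈ W`, so the component of `α` is `{2e} ∪ {e + f | e ⟂ f}` over `W`:
type `Cₙ`. Finally `e < f ↔ f - e ∈ Δ⁺` totally orders `{e ∈ W | 2e ∈ Δ⁺}`, and dominance of `χ`
makes `χ` the largest element.
-/

theorem Set.Finite.exists_fin_enum_strictAnti {ι : Type*} {s : Set ι} (hs : s.Finite)
    (r : ι → ι → Prop) (irrefl : ∀ x ∈ s, ¬r x x)
    (trans : ∀ x ∈ s, ∀ y ∈ s, ∀ z ∈ s, r x y → r y z → r x z)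
    (total : ∀ x ∈ s, ∀ y ∈ s, x ≠ y → r x y ∨ r y x) {a : ι} (ha : a ∈ s)
    (hmax : ∀ x ∈ s, ¬r a x) :
    ∃ (N : ℕ) (g : Fin (N + 1) → ι), (∀ i, g i ∈ s) ∧ (∀ x ∈ s, ∃ i, g i = x) ∧
      (∀ i j, i < j → r (g j) (g i)) ∧ g 0 = a := by
  classical
  have : IsStrictTotalOrder s (fun x y => r x y) :=
    { irrefl := fun x => irrefl x x.2
      trans := fun x y z => trans x x.2 y y.2 z z.2
      trichotomous := fun x y hxy hyx => by
        by_contra hne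
        rcases total x x.2 y y.2 (Subtype.coe_ne_coe.mpr hne) with h | h
        exacts [hxy h, hyx h] }
  let _ : LinearOrder s := linearOrderOfSTO fun x y => r x y
  have : Fintype s := hs.fintype
  have : Nonempty s := ⟨⟨a, ha⟩⟩
  obtain ⟨N, hN⟩ := Nat.exists_eq_succ_of_ne_zero (Fintype.card_ne_zero (α := s))
  let φ := monoEquivOfFin s hN
  have hanti : ∀ i j : Fin (N + 1), i < j → r (φ j.rev) (φ i.rev) :=
    fun i j hij => φ.strictMono (Fin.rev_lt_rev.mpr hij)
  have hsurj : ∀ x ∈ s, ∃ i : Fin (N + 1), (φ i.rev : ι) = x :=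
    fun x hx => ⟨(φ.symm ⟨x, hx⟩).rev, by simp⟩
  refine ⟨N, fun i => φ i.rev, fun i => (φ i.rev).2, hsurj, hanti, ?_⟩
  obtain ⟨k, hk⟩ := hsurj a ha
  rcases (Fin.zero_le k).eq_or_lt with rfl | hk₀
  · exact hk
  · exact absurd (hk ▸ hanti 0 k hk₀) (hmax _ (φ _).2)

section Linked

variable {E : Type*} [AddCommGroup E] {Δ : Finset E} {e f : E}

/-- On the halves `±eᵢ` of the long roots of a `Cₙ` component, `eᵢ + eⱼ` is a short root. -/
def Linked (Δ : Finset E) (e f : E) : Prop :=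
  f = e ∨ f = -e ∨ e + f ∈ Δ

theorem Linked.symm (h : Linked Δ e f) : Linked Δ f e := by
  rcases h with rfl | rfl | h
  · exact Or.inl rfl
  · exact Or.inr (Or.inl (neg_neg e).symm)
  · exact Or.inr (Or.inr (add_comm e f ▸ h))

theorem Linked.add_mem (h : Linked Δ e f) (h₁ : f ≠ e) (h₂ : f ≠ -e) :
    e + f ∈ Δ :=
  h.resolve_left h₁ |>.resolve_left h₂

end Linked

section RootSystem

variable {E : Type*} [NormedAddCommGroup E] [InnerProductSpace ℝ E]

structure IsReducedRootSystem (Δ : Finset E) : Prop where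
  zero_notMem : (0 : E) ∉ Δ
  eq_one_or_neg_one_of_smul_mem : ∀ α ∈ Δ, ∀ t : ℝ, t • α ∈ Δ → t = 1 ∨ t = -1
  exists_int : ∀ α ∈ Δ, ∀ β ∈ Δ, ∃ z : ℤ, 2 * ⟪β, α⟫ / ⟪α, α⟫ = (z : ℝ)
  reflection_mem : ∀ α ∈ Δ, ∀ β ∈ Δ, β - (2 * ⟪β, α⟫ / ⟪α, α⟫) • α ∈ Δ

def IsIntegralWeight (Δ : Finset E) (χ : E) : Prop :=
  ∀ β ∈ Δ, ∃ z : ℤ, 2 * ⟪χ, β⟫ / ⟪β, β⟫ = (z : ℝ)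

theorem IsIntegralWeight.neg {Δ : Finset E} {χ : E} (h : IsIntegralWeight Δ χ) :
    IsIntegralWeight Δ (-χ) := fun β hβ => by
  obtain ⟨z, hz⟩ := h β hβ
  exact ⟨-z, by rw [inner_neg_left, mul_neg, neg_div, hz, Int.cast_neg]⟩

theorem IsIntegralWeight.sub {Δ : Finset E} {χ χ' : E} (h : IsIntegralWeight Δ χ)
    (h' : IsIntegralWeight Δ χ') : IsIntegralWeight Δ (χ - χ') := fun β hβ => by
  obtain ⟨z, hz⟩ := h β hβ
  obtain ⟨z', hz'⟩ := h' β hβ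
  exact ⟨z - z', by rw [inner_sub_left, mul_sub, sub_div, hz, hz', Int.cast_sub]⟩

namespace IsReducedRootSystem

variable {Δ : Finset E} (hΔ : IsReducedRootSystem Δ)
include hΔ

theorem inner_self_pos {γ : E} (hγ : γ ∈ Δ) : 0 < ⟪γ, γ⟫ :=
  real_inner_self_pos.mpr fun h => hΔ.zero_notMem (h ▸ hγ)

theorem isIntegralWeight {γ : E} (hγ : γ ∈ Δ) : IsIntegralWeight Δ γ :=
  fun β hβ => hΔ.exists_int β hβ γ hγ

theorem sub_mem_of_two_inner_eq {β γ : E} (hβ : β ∈ Δ) (hγ : γ ∈ Δ)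
    (h : 2 * ⟪β, γ⟫ = ⟪γ, γ⟫) : β - γ ∈ Δ := by
  have h' := hΔ.reflection_mem γ hγ β hβ
  rwa [h, div_self (hΔ.inner_self_pos hγ).ne', one_smul] at h'

theorem neg_mem {γ : E} (hγ : γ ∈ Δ) : -γ ∈ Δ := by
  have h := hΔ.reflection_mem γ hγ γ hγ
  rwa [mul_div_assoc, div_self (hΔ.inner_self_pos hγ).ne', mul_one, two_smul, sub_add_cancel_left]
    at h

/-- Strict Cauchy–Schwarz; reducedness rules out the equality case. -/
theorem sq_inner_lt {β γ : E} (hβ : β ∈ Δ) (hγ : γ ∈ Δ) (h₁ : β ≠ γ) (h₂ : β ≠ -γ) :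
    ⟪γ, β⟫ ^ 2 < ⟪γ, γ⟫ * ⟪β, β⟫ := by
  refine lt_of_le_of_ne (by simpa [sq] using real_inner_mul_inner_self_le γ β) fun heq => ?_
  have hγ0 : γ ≠ 0 := real_inner_self_pos.mp (hΔ.inner_self_pos hγ)
  have hβ0 : β ≠ 0 := real_inner_self_pos.mp (hΔ.inner_self_pos hβ)
  have habs : |⟪γ, β⟫| = ‖γ‖ * ‖β‖ := by
    rw [← abs_of_nonneg (by positivity : 0 ≤ ‖γ‖ * ‖β‖), ← sq_eq_sq_iff_abs_eq_abs, heq,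
      real_inner_self_eq_norm_sq, real_inner_self_eq_norm_sq, mul_pow]
  obtain ⟨-, r, -, rfl⟩ := (abs_real_inner_div_norm_mul_norm_eq_one_iff γ β).mp <| by
    rw [abs_div, habs, abs_of_nonneg (by positivity), div_self (by positivity)]
  rcases hΔ.eq_one_or_neg_one_of_smul_mem γ hγ r hβ with rfl | rfl
  · exact h₁ (one_smul ℝ γ)
  · exact h₂ (neg_one_smul ℝ γ)

/-- Since `⟪e, y^∨⟫` and `⟪y, (2e)^∨⟫` are integers whose product `2⟪e,y⟫² / (|e|²|y|²)` lies
in `(0, 2)` by strict Cauchy–Schwarz, both are `±1`. -/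
theorem inner_eq_of_isIntegralWeight {e y : E} (he : IsIntegralWeight Δ e)
    (h2e : (2 : ℝ) • e ∈ Δ) (hy : y ∈ Δ) (hne : ⟪e, y⟫ ≠ 0) (h₁ : y ≠ (2 : ℝ) • e)
    (h₂ : y ≠ -((2 : ℝ) • e)) :
    ⟪y, y⟫ = 2 * ⟪e, e⟫ ∧ (⟪e, y⟫ = ⟪e, e⟫ ∨ ⟪e, y⟫ = -⟪e, e⟫) := by
  have hy0 := hΔ.inner_self_pos hy
  have he0 : 0 < ⟪e, e⟫ := by
    have := hΔ.inner_self_pos h2e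
    simp only [real_inner_smul_left, real_inner_smul_right] at this
    linarith
  have hCS : ⟪e, y⟫ ^ 2 < ⟪e, e⟫ * ⟪y, y⟫ := by
    have := hΔ.sq_inner_lt hy h2e h₁ h₂
    simp only [real_inner_smul_left, real_inner_smul_right] at this
    nlinarith
  obtain ⟨z, hz⟩ := he y hy
  obtain ⟨v, hv⟩ := hΔ.exists_int _ h2e y hy
  simp only [real_inner_smul_left, real_inner_smul_right, real_inner_comm e y] at hv
  rw [div_eq_iff hy0.ne'] at hz
  rw [div_eq_iff (by positivity)] at hv
  have hvz : v * z = 1 := by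
    have key : ((v * z : ℤ) : ℝ) * (⟪e, e⟫ * ⟪y, y⟫) = 2 * ⟪e, y⟫ ^ 2 := by
      push_cast; linear_combination (-⟪e, y⟫) * hz - ((z : ℝ) * ⟪y, y⟫ / 4) * hv
    have hpos : 0 < ⟪e, e⟫ * ⟪y, y⟫ := by positivity
    have hlt : ((v * z : ℤ) : ℝ) < 2 := by nlinarith
    have hgt : (0 : ℝ) < ((v * z : ℤ) : ℝ) := by
      by_contra! h; nlinarith [sq_pos_of_ne_zero hne]
    have h1 : v * z < 2 := by exact_mod_cast hlt
    have h2 : 0 < v * z := by exact_mod_cast hgt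
    omega
  rcases Int.eq_one_or_neg_one_of_mul_eq_one' hvz with ⟨rfl, rfl⟩ | ⟨rfl, rfl⟩ <;>
    push_cast at hz hv
  · exact ⟨by linarith, Or.inl (by linarith)⟩
  · exact ⟨by linarith, Or.inr (by linarith)⟩

end IsReducedRootSystem

def halfRoots (Δ : Finset E) (c : ℝ) : Set E :=
  {e | IsIntegralWeight Δ e ∧ (2 : ℝ) • e ∈ Δ ∧ ⟪e, e⟫ = c}

namespace IsReducedRootSystem

variable {Δ : Finset E} (hΔ : IsReducedRootSystem Δ) {c : ℝ} {e f g : E}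
include hΔ

theorem inner_self_pos_of_mem_halfRoots (he : e ∈ halfRoots Δ c) : 0 < ⟪e, e⟫ := by
  have := hΔ.inner_self_pos he.2.1
  simp only [real_inner_smul_left, real_inner_smul_right] at this
  linarith

theorem neg_mem_halfRoots (he : e ∈ halfRoots Δ c) : -e ∈ halfRoots Δ c :=
  ⟨he.1.neg, by simpa only [smul_neg] using hΔ.neg_mem he.2.1, by rw [inner_neg_neg, he.2.2]⟩

theorem inner_eq_zero_of_mem_halfRoots (he : e ∈ halfRoots Δ c) (hf : f ∈ halfRoots Δ c)
    (h₁ : f ≠ e) (h₂ : f ≠ -e) : ⟪e, f⟫ = 0 := by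
  by_contra hne
  have h2f : ⟪e, (2 : ℝ) • f⟫ ≠ 0 := by rw [real_inner_smul_right]; exact mul_ne_zero two_ne_zero hne
  have hinj := smul_right_injective E (two_ne_zero : (2 : ℝ) ≠ 0)
  obtain ⟨hnorm, -⟩ := hΔ.inner_eq_of_isIntegralWeight he.1 he.2.1 hf.2.1 h2f
    (fun h => h₁ (hinj h)) (fun h => h₂ (hinj (h.trans (smul_neg _ e).symm)))
  have := hΔ.inner_self_pos_of_mem_halfRoots he
  simp only [real_inner_smul_left, real_inner_smul_right, he.2.2, hf.2.2] at hnorm this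
  linarith

/-- Reflecting the root `e + f` in the root `2 • f`. -/
theorem sub_mem_of_linked (he : e ∈ halfRoots Δ c) (hf : f ∈ halfRoots Δ c) (h : Linked Δ e f)
    (h₁ : f ≠ e) (h₂ : f ≠ -e) : e - f ∈ Δ := by
  have horth := hΔ.inner_eq_zero_of_mem_halfRoots he hf h₁ h₂
  have hmem := hΔ.sub_mem_of_two_inner_eq (h.add_mem h₁ h₂) hf.2.1 <| by
    simp only [real_inner_smul_left, real_inner_smul_right, inner_add_left, horth]
    ring
  convert hmem using 1
  module

theorem linked_neg (he : e ∈ halfRoots Δ c) (hf : f ∈ halfRoots Δ c) (h : Linked Δ e f) :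
    Linked Δ e (-f) := by
  by_cases h₁ : f = e
  · exact Or.inr (Or.inl (h₁ ▸ rfl))
  by_cases h₂ : f = -e
  · exact Or.inl (by rw [h₂, neg_neg])
  exact Or.inr (Or.inr (by simpa only [← sub_eq_add_neg] using hΔ.sub_mem_of_linked he hf h h₁ h₂))

/-- In the generic case `e + g = (e + f) - (f - g)` is the reflection of `e + f` in `f - g`. -/
theorem linked_trans (he : e ∈ halfRoots Δ c) (hf : f ∈ halfRoots Δ c) (hg : g ∈ halfRoots Δ c)
    (hef : Linked Δ e f) (hfg : Linked Δ f g) : Linked Δ e g := by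
  by_cases hfe : f = e
  · exact hfe ▸ hfg
  by_cases hfe' : f = -e
  · subst hfe'
    simpa only [neg_neg] using (hΔ.linked_neg hg hf hfg.symm).symm
  by_cases hgf : g = f
  · exact hgf ▸ hef
  by_cases hgf' : g = -f
  · exact hgf' ▸ hΔ.linked_neg he hf hef
  by_cases hge : g = e
  · exact Or.inl hge
  by_cases hge' : g = -e
  · exact Or.inr (Or.inl hge')
  have hef₀ := hΔ.inner_eq_zero_of_mem_halfRoots he hf hfe hfe'
  have heg₀ := hΔ.inner_eq_zero_of_mem_halfRoots he hg hge hge'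
  have hfg₀ := hΔ.inner_eq_zero_of_mem_halfRoots hf hg hgf hgf'
  have hmem := hΔ.sub_mem_of_two_inner_eq (hef.add_mem hfe hfe')
    (hΔ.sub_mem_of_linked hf hg hfg hgf hgf') <| by
    simp only [inner_add_left, inner_sub_left, inner_sub_right,
      real_inner_comm f g, hef₀, heg₀, hfg₀, hf.2.2, hg.2.2]
    ring
  refine Or.inr (Or.inr ?_)
  convert hmem using 1
  abel

end IsReducedRootSystem

def longRootHalves (Δ : Finset E) (χ : E) : Set E :=
  {e ∈ halfRoots Δ ⟪χ, χ⟫ | Linked Δ χ e}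

theorem mem_longRootHalves_self {Δ : Finset E} {χ : E} (hχ : χ ∈ halfRoots Δ ⟪χ, χ⟫) :
    χ ∈ longRootHalves Δ χ :=
  ⟨hχ, Or.inl rfl⟩

def rootComponent (Δ : Finset E) (α : E) : Set E :=
  {β ∈ (Δ : Set E) |
    Relation.ReflTransGen (fun x y => x ∈ (Δ : Set E) ∧ y ∈ (Δ : Set E) ∧ ⟪x, y⟫ ≠ 0) α β}

theorem mem_rootComponent_self {Δ : Finset E} {α : E} (hα : α ∈ Δ) : α ∈ rootComponent Δ α :=
  ⟨hα, .refl⟩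

theorem mem_rootComponent_of_inner_ne_zero {Δ : Finset E} {α x y : E}
    (hx : x ∈ rootComponent Δ α) (hy : y ∈ Δ) (h : ⟪x, y⟫ ≠ 0) : y ∈ rootComponent Δ α :=
  ⟨hy, hx.2.tail ⟨hx.1, hy, h⟩⟩

/-- For `W = {±eᵢ}` with orthogonal `eᵢ`, this is `{±2eᵢ} ∪ {±eᵢ ± eⱼ | i ≠ j}`, type `Cₙ`. -/
def typeCRoots (W : Set E) : Set E :=
  {x | (∃ e ∈ W, x = (2 : ℝ) • e) ∨ ∃ e ∈ W, ∃ f ∈ W, ⟪e, f⟫ = 0 ∧ x = e + f}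

namespace IsReducedRootSystem

variable {Δ : Finset E} (hΔ : IsReducedRootSystem Δ) {χ e f y : E}
  (hχ : χ ∈ halfRoots Δ ⟪χ, χ⟫)
include hΔ hχ

theorem neg_mem_longRootHalves (he : e ∈ longRootHalves Δ χ) : -e ∈ longRootHalves Δ χ :=
  ⟨hΔ.neg_mem_halfRoots he.1, hΔ.linked_neg hχ he.1 he.2⟩

theorem linked_of_mem_longRootHalves (he : e ∈ longRootHalves Δ χ)
    (hf : f ∈ longRootHalves Δ χ) : Linked Δ e f :=
  hΔ.linked_trans he.1 hχ hf.1 he.2.symm hf.2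

theorem add_mem_of_mem_longRootHalves (he : e ∈ longRootHalves Δ χ)
    (hf : f ∈ longRootHalves Δ χ) (horth : ⟪e, f⟫ = 0) : e + f ∈ Δ := by
  have he₀ := hΔ.inner_self_pos_of_mem_halfRoots he.1
  refine (hΔ.linked_of_mem_longRootHalves hχ he hf).add_mem ?_ ?_ <;> rintro rfl
  · exact he₀.ne' horth
  · rw [inner_neg_right] at horth
    linarith

theorem sub_mem_of_mem_longRootHalves (he : e ∈ longRootHalves Δ χ)
    (hf : f ∈ longRootHalves Δ χ) (h₁ : f ≠ e) (h₂ : f ≠ -e) : e - f ∈ Δ :=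
  hΔ.sub_mem_of_linked he.1 hf.1 (hΔ.linked_of_mem_longRootHalves hχ he hf) h₁ h₂

theorem two_smul_mem_rootComponent (he : e ∈ longRootHalves Δ χ) :
    (2 : ℝ) • e ∈ rootComponent Δ ((2 : ℝ) • χ) := by
  have hχ₀ := hΔ.inner_self_pos_of_mem_halfRoots hχ
  have hα := mem_rootComponent_self hχ.2.1
  by_cases h₁ : e = χ
  · exact h₁ ▸ hα
  by_cases h₂ : e = -χ
  · subst h₂
    refine mem_rootComponent_of_inner_ne_zero hα he.1.2.1 ?_
    simp only [smul_neg, inner_neg_right, real_inner_smul_left, real_inner_smul_right]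
    nlinarith
  have horth := hΔ.inner_eq_zero_of_mem_halfRoots hχ he.1 h₁ h₂
  have he₀ := hΔ.inner_self_pos_of_mem_halfRoots he.1
  refine mem_rootComponent_of_inner_ne_zero
    (mem_rootComponent_of_inner_ne_zero hα (he.2.add_mem h₁ h₂) ?_) he.1.2.1 ?_
  · simp only [inner_add_right, real_inner_smul_left, horth]
    nlinarith
  · simp only [inner_add_left, real_inner_smul_right, horth]
    nlinarith

theorem typeCRoots_subset_rootComponent :
    typeCRoots (longRootHalves Δ χ) ⊆ rootComponent Δ ((2 : ℝ) • χ) := by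
  rintro x (⟨e, he, rfl⟩ | ⟨e, he, f, hf, horth, rfl⟩)
  · exact hΔ.two_smul_mem_rootComponent hχ he
  · have he₀ := hΔ.inner_self_pos_of_mem_halfRoots he.1
    refine mem_rootComponent_of_inner_ne_zero (hΔ.two_smul_mem_rootComponent hχ he)
      (hΔ.add_mem_of_mem_longRootHalves hχ he hf horth) ?_
    simp only [inner_add_right, real_inner_smul_left, horth]
    nlinarith

/-- A short root `y` with `⟪e, y⟫ = ⟪e, e⟫` is `e + f` for the half-root `f = y - e`, with
`2 • f = -(2 • e - 2 • y)` the reflection of `2 • e` in `y`, negated. -/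
theorem mem_typeCRoots_of_inner_eq (he : e ∈ longRootHalves Δ χ) (hy : y ∈ Δ)
    (hyy : ⟪y, y⟫ = 2 * ⟪e, e⟫) (hey : ⟪e, y⟫ = ⟪e, e⟫) : y ∈ typeCRoots (longRootHalves Δ χ) := by
  have he₀ := hΔ.inner_self_pos_of_mem_halfRoots he.1
  have hef : ⟪e, y - e⟫ = 0 := by rw [inner_sub_right, hey, sub_self]
  have hff : ⟪y - e, y - e⟫ = ⟪e, e⟫ := by
    rw [inner_sub_left, inner_sub_right, inner_sub_right, real_inner_comm e y, hey, hyy]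
    ring
  have h2f : (2 : ℝ) • (y - e) ∈ Δ := by
    have h := hΔ.reflection_mem y hy _ he.1.2.1
    rw [real_inner_smul_left, hey, hyy, show 2 * (2 * ⟪e, e⟫) / (2 * ⟪e, e⟫) = (2 : ℝ) by
      field_simp] at h
    convert hΔ.neg_mem h using 1
    module
  have hf : y - e ∈ halfRoots Δ ⟪χ, χ⟫ :=
    ⟨(hΔ.isIntegralWeight hy).sub he.1.1, h2f, hff.trans he.1.2.2⟩
  have hlinked : Linked Δ e (y - e) := Or.inr (Or.inr (by rwa [add_sub_cancel]))
  exact Or.inr ⟨e, he, y - e, ⟨hf, hΔ.linked_trans hχ he.1 hf he.2 hlinked⟩, hef, (add_sub_cancel e y).symm⟩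

theorem mem_typeCRoots_of_inner_half_ne_zero (he : e ∈ longRootHalves Δ χ) (hy : y ∈ Δ)
    (hne : ⟪e, y⟫ ≠ 0) : y ∈ typeCRoots (longRootHalves Δ χ) := by
  by_cases h₁ : y = (2 : ℝ) • e
  · exact Or.inl ⟨e, he, h₁⟩
  by_cases h₂ : y = -((2 : ℝ) • e)
  · exact Or.inl ⟨-e, hΔ.neg_mem_longRootHalves hχ he, by rw [h₂, smul_neg]⟩
  obtain ⟨hyy, hey | hey⟩ := hΔ.inner_eq_of_isIntegralWeight he.1.1 he.1.2.1 hy hne h₁ h₂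
  · exact hΔ.mem_typeCRoots_of_inner_eq hχ he hy hyy hey
  · refine hΔ.mem_typeCRoots_of_inner_eq hχ (hΔ.neg_mem_longRootHalves hχ he) hy ?_ ?_ <;>
      simp only [inner_neg_left, inner_neg_right, hyy, hey, neg_neg]

theorem mem_typeCRoots_of_inner_ne_zero {x : E} (hx : x ∈ typeCRoots (longRootHalves Δ χ))
    (hy : y ∈ Δ) (hne : ⟪x, y⟫ ≠ 0) : y ∈ typeCRoots (longRootHalves Δ χ) := by
  rcases hx with ⟨e, he, rfl⟩ | ⟨e, he, f, hf, -, rfl⟩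
  · rw [real_inner_smul_left] at hne
    exact hΔ.mem_typeCRoots_of_inner_half_ne_zero hχ he hy (right_ne_zero_of_mul hne)
  · rw [inner_add_left] at hne
    by_cases hey : ⟪e, y⟫ = 0
    · rw [hey, zero_add] at hne
      exact hΔ.mem_typeCRoots_of_inner_half_ne_zero hχ hf hy hne
    · exact hΔ.mem_typeCRoots_of_inner_half_ne_zero hχ he hy hey

theorem rootComponent_eq_typeCRoots :
    rootComponent Δ ((2 : ℝ) • χ) = typeCRoots (longRootHalves Δ χ) := by
  refine subset_antisymm ?_ (hΔ.typeCRoots_subset_rootComponent hχ)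
  rintro y ⟨-, hy⟩
  induction hy with
  | refl => exact Or.inl ⟨χ, mem_longRootHalves_self hχ, rfl⟩
  | tail _ hxy ih => exact hΔ.mem_typeCRoots_of_inner_ne_zero hχ ih hxy.2.1 hxy.2.2

end IsReducedRootSystem

theorem typeCRoots_eq_of_enum {ι : Type*} {W : Set E} {e : ι → E} (hmem : ∀ i, e i ∈ W)
    (hneg : ∀ w ∈ W, -w ∈ W) (hW : ∀ w ∈ W, ∃ i, w = e i ∨ w = -e i)
    (horth : ∀ i j, i ≠ j → ⟪e i, e j⟫ = 0) (hne : ∀ i, e i ≠ 0) :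
    typeCRoots W = {x | (∃ i, x = (2 : ℝ) • e i ∨ x = -((2 : ℝ) • e i)) ∨
      (∃ i j, i ≠ j ∧ (x = e i + e j ∨ x = e i - e j ∨ x = -(e i) - e j))} := by
  ext x
  constructor
  · rintro (⟨w, hw, rfl⟩ | ⟨w, hw, w', hw', horth', rfl⟩)
    · obtain ⟨i, rfl | rfl⟩ := hW w hw
      · exact Or.inl ⟨i, Or.inl rfl⟩
      · exact Or.inl ⟨i, Or.inr (smul_neg _ _)⟩
    obtain ⟨i, rfl | rfl⟩ := hW w hw <;> obtain ⟨j, rfl | rfl⟩ := hW w' hw' <;>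
      have hij : i ≠ j := by
        rintro rfl
        simp only [inner_neg_left, inner_neg_right, neg_neg, neg_eq_zero, inner_self_eq_zero]
          at horth'
        exact hne i horth'
    · exact Or.inr ⟨i, j, hij, Or.inl rfl⟩
    · exact Or.inr ⟨i, j, hij, Or.inr (Or.inl (sub_eq_add_neg _ _).symm)⟩
    · exact Or.inr ⟨j, i, hij.symm, Or.inr (Or.inl (neg_add_eq_sub _ _))⟩
    · exact Or.inr ⟨i, j, hij, Or.inr (Or.inr (sub_eq_add_neg _ _).symm)⟩
  · rintro (⟨i, rfl | rfl⟩ | ⟨i, j, hij, rfl | rfl | rfl⟩)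
    · exact Or.inl ⟨e i, hmem i, rfl⟩
    · exact Or.inl ⟨-e i, hneg _ (hmem i), (smul_neg _ _).symm⟩
    · exact Or.inr ⟨e i, hmem i, e j, hmem j, horth i j hij, rfl⟩
    · refine Or.inr ⟨e i, hmem i, -e j, hneg _ (hmem j), ?_, sub_eq_add_neg _ _⟩
      rw [inner_neg_right, horth i j hij, neg_zero]
    · refine Or.inr ⟨-e i, hneg _ (hmem i), -e j, hneg _ (hmem j), ?_, sub_eq_add_neg _ _⟩
      rw [inner_neg_neg, horth i j hij]

theorem isIntegralWeight_of_dominant {Δ Δpos : Finset E} {χ : E}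
    (hpos_cover : ∀ γ ∈ Δ, γ ∈ Δpos ∨ -γ ∈ Δpos)
    (hdom : ∀ γ ∈ Δpos, ∃ z : ℤ, 0 ≤ z ∧ 2 * ⟪χ, γ⟫ / ⟪γ, γ⟫ = (z : ℝ)) :
    IsIntegralWeight Δ χ := by
  intro β hβ
  rcases hpos_cover β hβ with h | h
  · obtain ⟨z, -, hz⟩ := hdom β h
    exact ⟨z, hz⟩
  · obtain ⟨z, -, hz⟩ := hdom (-β) h
    rw [inner_neg_right, inner_neg_neg, mul_neg, neg_div] at hz
    exact ⟨-z, by rw [Int.cast_neg, ← hz, neg_neg]⟩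

namespace IsReducedRootSystem

variable {Δ Δpos : Finset E} (hΔ : IsReducedRootSystem Δ) {χ y : E}
  (hχ : χ ∈ halfRoots Δ ⟪χ, χ⟫) (hpos_disj : ∀ γ ∈ Δpos, -γ ∉ Δpos)
include hΔ hχ hpos_disj

/-- `χ` is the largest of the positive half-roots, as `⟪χ, y - χ⟫ = -⟪χ, χ⟫ < 0`. -/
theorem sub_notMem_of_dominant
    (hdom : ∀ γ ∈ Δpos, ∃ z : ℤ, 0 ≤ z ∧ 2 * ⟪χ, γ⟫ / ⟪γ, γ⟫ = (z : ℝ))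
    (hy : y ∈ longRootHalves Δ χ) (hyχ : y ≠ -χ) : y - χ ∉ Δpos := by
  intro hpos
  have hyne : y ≠ χ := by
    rintro rfl
    rw [sub_self] at hpos
    exact hpos_disj 0 hpos (by rwa [neg_zero])
  have horth := hΔ.inner_eq_zero_of_mem_halfRoots hχ hy.1 hyne hyχ
  have hχ₀ := hΔ.inner_self_pos_of_mem_halfRoots hχ
  have hβ₀ : 0 < ⟪y - χ, y - χ⟫ := real_inner_self_pos.mpr (sub_ne_zero.mpr hyne)
  obtain ⟨z, hz₀, hz⟩ := hdom _ hpos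
  rw [inner_sub_right, horth, zero_sub] at hz
  have hneg : 2 * -⟪χ, χ⟫ / ⟪y - χ, y - χ⟫ < 0 := div_neg_of_neg_of_pos (by linarith) hβ₀
  have hz₀' : (0 : ℝ) ≤ z := by exact_mod_cast hz₀
  linarith

theorem sub_mem_pos_trans (hpos_add : ∀ γ ∈ Δpos, ∀ δ ∈ Δpos, γ + δ ∈ Δ → γ + δ ∈ Δpos)
    {x z : E} (hx : x ∈ longRootHalves Δ χ) (hz : z ∈ longRootHalves Δ χ) (hzx : z ≠ -x)
    (hxy : y - x ∈ Δpos) (hyz : z - y ∈ Δpos) : z - x ∈ Δpos := by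
  by_cases hxz : z = x
  · subst hxz
    exact absurd hyz (by rw [← neg_sub]; exact hpos_disj _ hxy)
  · have hsum : (y - x) + (z - y) = z - x := sub_add_sub_cancel' y x z
    rw [← hsum]
    exact hpos_add _ hxy _ hyz <| hsum ▸ hΔ.sub_mem_of_mem_longRootHalves hχ hz hx
      (Ne.symm hxz) fun h => hzx (by rw [h, neg_neg])

theorem exists_fin_enum_longRootHalves (hpos_cover : ∀ γ ∈ Δ, γ ∈ Δpos ∨ -γ ∈ Δpos)
    (hpos_add : ∀ γ ∈ Δpos, ∀ δ ∈ Δpos, γ + δ ∈ Δ → γ + δ ∈ Δpos)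
    (hdom : ∀ γ ∈ Δpos, ∃ z : ℤ, 0 ≤ z ∧ 2 * ⟪χ, γ⟫ / ⟪γ, γ⟫ = (z : ℝ))
    (hχpos : (2 : ℝ) • χ ∈ Δpos) :
    ∃ (N : ℕ) (e : Fin (N + 1) → E), (∀ i, e i ∈ longRootHalves Δ χ) ∧
      (∀ w ∈ longRootHalves Δ χ, ∃ i, w = e i ∨ w = -e i) ∧
      (∀ i j, i ≠ j → ⟪e i, e j⟫ = 0) ∧ (∀ i, (2 : ℝ) • e i ∈ Δpos) ∧
      (∀ i j, i < j → e i - e j ∈ Δpos) ∧ e 0 = χ := by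
  set s := {w ∈ longRootHalves Δ χ | (2 : ℝ) • w ∈ Δpos}
  have hzero : (0 : E) ∉ Δpos := fun h => hpos_disj 0 h (by rwa [neg_zero])
  have hne_neg : ∀ x ∈ s, ∀ y ∈ s, y ≠ -x := by
    rintro x hx y hy rfl
    exact hpos_disj _ hx.2 (by simpa only [smul_neg] using hy.2)
  have hsub : ∀ x ∈ s, ∀ y ∈ s, x ≠ y → y - x ∈ Δ := fun x hx y hy hxy =>
    hΔ.sub_mem_of_mem_longRootHalves hχ hy.1 hx.1 hxy (hne_neg y hy x hx)
  have hfin : s.Finite := ((Δpos : Set E).toFinite.image ((2 : ℝ)⁻¹ • ·)).subset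
    fun w hw => ⟨_, hw.2, inv_smul_smul₀ two_ne_zero w⟩
  obtain ⟨N, e, hmem, hsurj, hanti, he₀⟩ := hfin.exists_fin_enum_strictAnti
    (fun x y => y - x ∈ Δpos) (fun x _ h => hzero (by rwa [sub_self] at h))
    (fun x hx y _ z hz => hΔ.sub_mem_pos_trans hχ hpos_disj hpos_add hx.1 hz.1 (hne_neg x hx z hz))
    (fun x hx y hy hxy => (hpos_cover _ (hsub x hx y hy hxy)).imp_right (by rw [neg_sub]; exact id))
    ⟨mem_longRootHalves_self hχ, hχpos⟩
    (fun y hy => hΔ.sub_notMem_of_dominant hχ hpos_disj hdom hy.1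
      (hne_neg χ ⟨mem_longRootHalves_self hχ, hχpos⟩ y hy))
  have hinj : ∀ i j, i ≠ j → e j ≠ e i := by
    intro i j hij h
    rcases hij.lt_or_gt with hij | hij
    · exact hzero (by simpa [h] using hanti i j hij)
    · exact hzero (by simpa [h] using hanti j i hij)
  refine ⟨N, e, fun i => (hmem i).1, fun w hw => ?_, fun i j hij =>
    hΔ.inner_eq_zero_of_mem_halfRoots (hmem i).1.1 (hmem j).1.1 (hinj i j hij)
      (hne_neg _ (hmem i) _ (hmem j)), fun i => (hmem i).2, hanti, he₀⟩
  rcases hpos_cover _ hw.1.2.1 with h | h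
  · obtain ⟨i, hi⟩ := hsurj w ⟨hw, h⟩
    exact ⟨i, Or.inl hi.symm⟩
  · obtain ⟨i, hi⟩ := hsurj (-w) ⟨hΔ.neg_mem_longRootHalves hχ hw, by rwa [smul_neg]⟩
    exact ⟨i, Or.inr (by rw [hi, neg_neg])⟩

end IsReducedRootSystem

end RootSystem

theorem half_root_dominant_weight_type_C_general
    (E : Type*) [NormedAddCommGroup E] [InnerProductSpace ℝ E]
    (Δ : Finset E)
    (hzero : (0 : E) ∉ Δ)
    (hreduced : ∀ α ∈ Δ, ∀ t : ℝ, t • α ∈ Δ → t = 1 ∨ t = -1)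
    (hcrys : ∀ α ∈ Δ, ∀ β ∈ Δ, ∃ z : ℤ, 2 * ⟪β, α⟫ / ⟪α, α⟫ = (z : ℝ))
    (hrefl : ∀ α ∈ Δ, ∀ β ∈ Δ, β - (2 * ⟪β, α⟫ / ⟪α, α⟫) • α ∈ Δ)
    -- positive system
    (Δpos : Finset E)
    (hpos_sub : Δpos ⊆ Δ)
    (hpos_cover : ∀ γ ∈ Δ, γ ∈ Δpos ∨ -γ ∈ Δpos)
    (hpos_disj : ∀ γ ∈ Δpos, -γ ∉ Δpos)
    (hpos_add : ∀ γ ∈ Δpos, ∀ δ ∈ Δpos, γ + δ ∈ Δ → γ + δ ∈ Δpos)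
    -- χ is a dominant integral weight with 2χ = α a positive root
    (χ : E)
    (hdom : ∀ γ ∈ Δpos, ∃ z : ℤ, 0 ≤ z ∧ 2 * ⟪χ, γ⟫ / ⟪γ, γ⟫ = (z : ℝ))
    (α : E) (hα : α ∈ Δpos)
    (h2χ : (2 : ℝ) • χ = α) :
    ∃ (N : ℕ) (e : Fin (N + 1) → E),
      -- the `e i` are pairwise orthogonal of equal nonzero length
      (∀ i j, i ≠ j → ⟪e i, e j⟫ = 0) ∧
      (∀ i, e i ≠ 0) ∧
      (∀ i j, ‖e i‖ = ‖e j‖) ∧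
      -- the irreducible component of Δ containing α is of type Cₙ:
      {β ∈ (Δ : Set E) |
          Relation.ReflTransGen
            (fun x y => x ∈ (Δ : Set E) ∧ y ∈ (Δ : Set E) ∧ ⟪x, y⟫ ≠ 0) α β}
        = {x | (∃ i, x = (2 : ℝ) • e i ∨ x = -((2 : ℝ) • e i)) ∨
               (∃ i j, i ≠ j ∧ (x = e i + e j ∨ x = e i - e j ∨ x = -(e i) - e j))} ∧
      -- ordering compatible with the positive system
      (∀ i, (2 : ℝ) • e i ∈ Δpos) ∧
      (∀ i j, i < j → e i - e j ∈ Δpos) ∧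
      -- α = 2e₀ is a long root and χ = e₀ is the first fundamental weight
      α = (2 : ℝ) • e 0 ∧
      χ = e 0 := by
  have hΔ : IsReducedRootSystem Δ := ⟨hzero, hreduced, hcrys, hrefl⟩
  subst h2χ
  have hχ : χ ∈ halfRoots Δ ⟪χ, χ⟫ :=
    ⟨isIntegralWeight_of_dominant hpos_cover hdom, hpos_sub hα, rfl⟩
  obtain ⟨N, e, hmem, hcover, horth, hpos, hanti, rfl⟩ :=
    hΔ.exists_fin_enum_longRootHalves hχ hpos_disj hpos_cover hpos_add hdom hα
  have hne : ∀ i, e i ≠ 0 := fun i =>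
    real_inner_self_pos.mp (hΔ.inner_self_pos_of_mem_halfRoots (hmem i).1)
  refine ⟨N, e, horth, hne, fun i j => ?_, ?_, hpos, hanti, rfl, rfl⟩
  · rw [norm_eq_sqrt_real_inner, norm_eq_sqrt_real_inner, (hmem i).1.2.2, (hmem j).1.2.2]
  · rw [← typeCRoots_eq_of_enum hmem (fun w => hΔ.neg_mem_longRootHalves hχ) hcover horth hne]
    exact hΔ.rootComponent_eq_typeCRoots hχ

/-- If `χ` is a dominant integral weight of a root system `Δ` with `2χ = α` a positive
root, then `α` is a long root of an irreducible component of `Δ` of type `Cₙ`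
(`n ≥ 1`, with `C₁ = A₁`), and `χ` is the first fundamental weight of that component. -/
theorem half_root_dominant_weight_type_C
    (E : Type*) [NormedAddCommGroup E] [InnerProductSpace ℝ E] [FiniteDimensional ℝ E]
    (Δ : Finset E)
    (hzero : (0 : E) ∉ Δ)
    (hreduced : ∀ α ∈ Δ, ∀ t : ℝ, t • α ∈ Δ → t = 1 ∨ t = -1)
    (hcrys : ∀ α ∈ Δ, ∀ β ∈ Δ, ∃ z : ℤ, 2 * ⟪β, α⟫ / ⟪α, α⟫ = (z : ℝ))
    (hrefl : ∀ α ∈ Δ, ∀ β ∈ Δ, β - (2 * ⟪β, α⟫ / ⟪α, α⟫) • α ∈ Δ)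
    -- positive system
    (Δpos : Finset E)
    (hpos_sub : Δpos ⊆ Δ)
    (hpos_cover : ∀ γ ∈ Δ, γ ∈ Δpos ∨ -γ ∈ Δpos)
    (hpos_disj : ∀ γ ∈ Δpos, -γ ∉ Δpos)
    (hpos_add : ∀ γ ∈ Δpos, ∀ δ ∈ Δpos, γ + δ ∈ Δ → γ + δ ∈ Δpos)
    -- χ is a dominant integral weight with 2χ = α a positive root
    (χ : E)
    (hdom : ∀ γ ∈ Δpos, ∃ z : ℤ, 0 ≤ z ∧ 2 * ⟪χ, γ⟫ / ⟪γ, γ⟫ = (z : ℝ))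
    (α : E) (hα : α ∈ Δpos)
    (h2χ : (2 : ℝ) • χ = α) :
    ∃ (N : ℕ) (e : Fin (N + 1) → E),
      -- the `e i` are pairwise orthogonal of equal nonzero length
      (∀ i j, i ≠ j → ⟪e i, e j⟫ = 0) ∧
      (∀ i, e i ≠ 0) ∧
      (∀ i j, ‖e i‖ = ‖e j‖) ∧
      -- the irreducible component of Δ containing α is of type Cₙ:
      {β ∈ (Δ : Set E) |
          Relation.ReflTransGen
            (fun x y => x ∈ (Δ : Set E) ∧ y ∈ (Δ : Set E) ∧ ⟪x, y⟫ ≠ 0) α β}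
        = {x | (∃ i, x = (2 : ℝ) • e i ∨ x = -((2 : ℝ) • e i)) ∨
               (∃ i j, i ≠ j ∧ (x = e i + e j ∨ x = e i - e j ∨ x = -(e i) - e j))} ∧
      -- ordering compatible with the positive system
      (∀ i, (2 : ℝ) • e i ∈ Δpos) ∧
      (∀ i j, i < j → e i - e j ∈ Δpos) ∧
      -- α = 2e₀ is a long root and χ = e₀ is the first fundamental weight
      α = (2 : ℝ) • e 0 ∧
      χ = e 0 :=
  half_root_dominant_weight_type_C_general E Δ hzero hreduced hcrys hrefl Δpos hpos_sub hpos_cover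
    hpos_disj hpos_add χ hdom α hα h2χ
end

section
/- Let α, β be positive roots in a root system such that χ = (1/2)(α + β) is a dominant integral weight and 2χ is not itself a root. Then ⟨α, β∨⟩ = ⟨β, α∨⟩ = 0, and consequently ⟨χ, α∨⟩ = 1 and ⟨χ - α, β∨⟩ = 1. -/
/-!
Integrality of `χ = (α + β)/2` says that `⟨χ, α∨⟩ = 1 + ⟪β, α⟫/⟪α, α⟫` and
`⟨χ, β∨⟩ = 1 + ⟪α, β⟫/⟪β, β⟫` are integers, i.e. both Cartan integers `⟨β, α∨⟩`, `⟨α, β∨⟩`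
are even. Their product is `4⟪α, β⟫²/(⟪α, α⟫⟪β, β⟫) ≤ 4` by Cauchy–Schwarz, so if
`⟪α, β⟫ ≠ 0` both are `2` or both are `-2`. Then `‖β ∓ α‖² = 0`, so `β = ±α`, which is
impossible for distinct positive roots.
-/

open scoped RealInnerProductSpace

section InnerProduct

variable {E : Type*} [NormedAddCommGroup E] [InnerProductSpace ℝ E]

theorem two_mul_inner_half_add_div_inner_self (α : E) {β : E} (hβ : β ≠ 0) :
    2 * ⟪(1 / 2 : ℝ) • (α + β), β⟫ / ⟪β, β⟫ = ⟪α, β⟫ / ⟪β, β⟫ + 1 := by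
  have hB : ⟪β, β⟫ ≠ 0 := inner_self_ne_zero.mpr hβ
  rw [real_inner_smul_left, inner_add_left]
  field_simp

theorem eq_smul_of_inner_eq_mul {α β : E} {r : ℝ} (h₁ : ⟪α, β⟫ = r * ⟪α, α⟫)
    (h₂ : ⟪β, β⟫ = r ^ 2 * ⟪α, α⟫) : β = r • α := by
  have h : ⟪β - r • α, β - r • α⟫ = 0 := by
    simp only [inner_sub_left, inner_sub_right, real_inner_smul_left, real_inner_smul_right,
      real_inner_comm α β, h₁, h₂]
    ring
  exact sub_eq_zero.mp (inner_self_eq_zero.mp h)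

theorem inner_eq_zero_or_eq_or_eq_neg_of_div_inner_self_eq_int {α β : E}
    (hα : α ≠ 0) (hβ : β ≠ 0) {m n : ℤ} (hm : ⟪β, α⟫ / ⟪α, α⟫ = m) (hn : ⟪α, β⟫ / ⟪β, β⟫ = n) :
    ⟪α, β⟫ = 0 ∨ β = α ∨ β = -α := by
  rcases eq_or_ne ⟪α, β⟫ 0 with hc | hc
  · exact Or.inl hc
  right
  have hA : 0 < ⟪α, α⟫ := real_inner_self_pos.mpr hα
  have hB : 0 < ⟪β, β⟫ := real_inner_self_pos.mpr hβ
  rw [real_inner_comm, div_eq_iff hA.ne'] at hm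
  rw [div_eq_iff hB.ne'] at hn
  have hsq : ⟪α, β⟫ * ⟪α, β⟫ = (m * n : ℤ) * (⟪α, α⟫ * ⟪β, β⟫) :=
    calc ⟪α, β⟫ * ⟪α, β⟫ = (m * ⟪α, α⟫) * (n * ⟪β, β⟫) := by rw [← hm, ← hn]
      _ = (m * n : ℤ) * (⟪α, α⟫ * ⟪β, β⟫) := by push_cast; ring
  have hmn : m * n = 1 := by
    have hpos : (0 : ℝ) < (m * n : ℤ) :=
      pos_of_mul_pos_left (hsq ▸ mul_self_pos.mpr hc) (mul_pos hA hB).le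
    have hle : ((m * n : ℤ) : ℝ) ≤ 1 := by
      refine le_of_mul_le_mul_right ?_ (mul_pos hA hB)
      rw [← hsq, one_mul]
      exact real_inner_mul_inner_self_le α β
    exact le_antisymm (by exact_mod_cast hle) (by exact_mod_cast hpos)
  rcases Int.eq_one_or_neg_one_of_mul_eq_one' hmn with ⟨rfl, rfl⟩ | ⟨rfl, rfl⟩
  · have hβα : ⟪β, β⟫ = (1 : ℝ) ^ 2 * ⟪α, α⟫ := by push_cast at hm hn; linarith
    exact Or.inl (by simpa using eq_smul_of_inner_eq_mul (by simpa using hm) hβα)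
  · have hβα : ⟪β, β⟫ = (-1 : ℝ) ^ 2 * ⟪α, α⟫ := by push_cast at hm hn; linarith
    exact Or.inr (by simpa using eq_smul_of_inner_eq_mul (by simpa using hm) hβα)

end InnerProduct

theorem half_sum_of_roots_dominant_orthogonal_general
    (E : Type*) [NormedAddCommGroup E] [InnerProductSpace ℝ E]
    (Δ : Finset E)
    (hzero : (0 : E) ∉ Δ)
    -- positive system
    (Δpos : Finset E)
    (hpos_sub : Δpos ⊆ Δ)
    (hpos_disj : ∀ γ ∈ Δpos, -γ ∉ Δpos)
    (α β : E) (hα : α ∈ Δpos) (hβ : β ∈ Δpos) (hne : α ≠ β)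
    (χ : E) (hχ : χ = (1 / 2 : ℝ) • (α + β))
    -- χ is a dominant integral weight
    (hint : ∀ γ ∈ Δ, ∃ z : ℤ, 2 * ⟪χ, γ⟫ / ⟪γ, γ⟫ = (z : ℝ)) :
    2 * ⟪α, β⟫ / ⟪β, β⟫ = 0 ∧
    2 * ⟪β, α⟫ / ⟪α, α⟫ = 0 ∧
    ⟪α, β⟫ = 0 ∧
    2 * ⟪χ, α⟫ / ⟪α, α⟫ = 1 ∧
    2 * ⟪χ - α, β⟫ / ⟪β, β⟫ = 1 := by
  have hα0 : α ≠ 0 := ne_of_mem_of_not_mem (hpos_sub hα) hzero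
  have hβ0 : β ≠ 0 := ne_of_mem_of_not_mem (hpos_sub hβ) hzero
  have hχα : 2 * ⟪χ, α⟫ / ⟪α, α⟫ = ⟪β, α⟫ / ⟪α, α⟫ + 1 := by
    rw [hχ, add_comm, two_mul_inner_half_add_div_inner_self β hα0]
  have hχβ : 2 * ⟪χ, β⟫ / ⟪β, β⟫ = ⟪α, β⟫ / ⟪β, β⟫ + 1 := by
    rw [hχ, two_mul_inner_half_add_div_inner_self α hβ0]
  obtain ⟨m, hm⟩ := hint α (hpos_sub hα)
  obtain ⟨n, hn⟩ := hint β (hpos_sub hβ)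
  have horth : ⟪α, β⟫ = 0 := by
    rcases inner_eq_zero_or_eq_or_eq_neg_of_div_inner_self_eq_int hα0 hβ0
        (m := m - 1) (n := n - 1) (by push_cast; linarith) (by push_cast; linarith)
      with h | rfl | rfl
    · exact h
    · exact absurd rfl hne
    · exact absurd hβ (hpos_disj α hα)
  have horth' : ⟪β, α⟫ = 0 := real_inner_comm α β ▸ horth
  refine ⟨by simp [horth], by simp [horth'], horth, ?_, ?_⟩
  · rw [hχα, horth']
    simp
  · rw [inner_sub_left, horth, sub_zero, hχβ, horth]
    simp

/-- If `α, β` are positive roots with `χ = (α+β)/2` a dominant integral weight and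
`2χ = α + β` not a root, then `⟨α, β∨⟩ = ⟨β, α∨⟩ = 0` (equivalently `⟪α, β⟫ = 0`),
and consequently `⟨χ, α∨⟩ = 1` and `⟨χ − α, β∨⟩ = 1`. -/
theorem half_sum_of_roots_dominant_orthogonal
    (E : Type*) [NormedAddCommGroup E] [InnerProductSpace ℝ E] [FiniteDimensional ℝ E]
    (Δ : Finset E)
    (hzero : (0 : E) ∉ Δ)
    (hreduced : ∀ γ ∈ Δ, ∀ t : ℝ, t • γ ∈ Δ → t = 1 ∨ t = -1)
    (hcrys : ∀ γ ∈ Δ, ∀ δ ∈ Δ, ∃ z : ℤ, 2 * ⟪γ, δ⟫ / ⟪δ, δ⟫ = (z : ℝ))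
    (hrefl : ∀ γ ∈ Δ, ∀ δ ∈ Δ, γ - (2 * ⟪γ, δ⟫ / ⟪δ, δ⟫) • δ ∈ Δ)
    -- positive system
    (Δpos : Finset E)
    (hpos_sub : Δpos ⊆ Δ)
    (hpos_cover : ∀ γ ∈ Δ, γ ∈ Δpos ∨ -γ ∈ Δpos)
    (hpos_disj : ∀ γ ∈ Δpos, -γ ∉ Δpos)
    (α β : E) (hα : α ∈ Δpos) (hβ : β ∈ Δpos) (hne : α ≠ β)
    (χ : E) (hχ : χ = (1 / 2 : ℝ) • (α + β))
    (hnotroot : α + β ∉ Δ)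
    -- χ is a dominant integral weight
    (hint : ∀ γ ∈ Δ, ∃ z : ℤ, 2 * ⟪χ, γ⟫ / ⟪γ, γ⟫ = (z : ℝ))
    (hdom : ∀ γ ∈ Δpos, 0 ≤ 2 * ⟪χ, γ⟫ / ⟪γ, γ⟫) :
    2 * ⟪α, β⟫ / ⟪β, β⟫ = 0 ∧
    2 * ⟪β, α⟫ / ⟪α, α⟫ = 0 ∧
    ⟪α, β⟫ = 0 ∧
    2 * ⟪χ, α⟫ / ⟪α, α⟫ = 1 ∧
    2 * ⟪χ - α, β⟫ / ⟪β, β⟫ = 1 :=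
  half_sum_of_roots_dominant_orthogonal_general E Δ hzero Δpos hpos_sub hpos_disj α β hα hβ hne χ hχ
    hint
end
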